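/- Let {x_i} be a homogeneous basis of p(n) ⊂ gl(n|n) and {x_i*} the dual basis of the complement g* under the supertrace form, as given explicitly in the paper (in terms of E_{st}, X_{st}, X_{ss}, Y_{st} and their duals). Then for every index i: Σ_{k∈I} (−1)^{|e_k|} x_i* e_k ⊗ e_{\bar k} = Σ_{k∈I} (−1)^{|e_k| + |x_i||e_k|} e_k ⊗ x_i* e_{\bar k} in V ⊗ V, where V = ℂ^{n|n}. -/

import Mathlib

open Sum Matrix

/-! `V = ℂ^{n|n}` with basis indexed by `Idx n = Fin n ⊕ Fin n`
(`Sum.inl` = even indices, `Sum.inr` = odd); `gl(n|n)` is realized as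
`Matrix (Idx n) (Idx n) ℂ`, and `V ⊗ V` as coordinate functions
`Idx n × Idx n → ℂ`. -/

abbrev Idx (n : ℕ) := Fin n ⊕ Fin n

/-- The bar involution `i ↦ ī`. -/
def bar {n : ℕ} : Idx n → Idx n := Sum.swap

/-- Parity: `false` (even) on `1,…,n`, `true` (odd) on `1̄,…,n̄`. -/
def pIdx {n : ℕ} : Idx n → Bool := Sum.elim (fun _ => false) (fun _ => true)

/-- The sign `(−1)^{|e_i|}`. -/
def sgn {n : ℕ} (i : Idx n) : ℂ := if pIdx i then -1 else 1

/-- `V ⊗ V` in coordinates. -/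
abbrev VV (n : ℕ) := Idx n × Idx n → ℂ

/-- `ε(e_a ⊗ e_b) = δ_{a,b̄} ∑_{i∈I} (−1)^{|e_i|} e_i ⊗ e_{ī}`. -/
noncomputable def epsOp (n : ℕ) : VV n →ₗ[ℂ] VV n :=
  LinearMap.pi fun p =>
    (if p.2 = bar p.1 then sgn p.1 else 0) • ∑ a : Idx n, LinearMap.proj (a, bar a)

/-- The basis vector `e_k` of `V`. -/
noncomputable def stdVec {n : ℕ} (k : Idx n) : Idx n → ℂ := Pi.single k 1

/-- The column `X e_k` of a matrix `X ∈ gl(n|n)`. -/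
def colVec {n : ℕ} (X : Matrix (Idx n) (Idx n) ℂ) (k : Idx n) : Idx n → ℂ :=
  fun a => X a k

/-- The pure tensor `u ⊗ v ∈ V ⊗ V` in coordinates. -/
def tens {n : ℕ} (u v : Idx n → ℂ) : VV n := fun p => u p.1 * v p.2

/-- Membership in the periplectic Lie superalgebra
`p(n) = {[[A,U],[L,−Aᵗ]] : U symmetric, L skew-symmetric} ⊂ gl(n|n)`. -/
def IsPn {n : ℕ} (X : Matrix (Idx n) (Idx n) ℂ) : Prop :=
  (∀ s t, X (inr s) (inr t) = -X (inl t) (inl s)) ∧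
  (∀ s t, X (inl s) (inr t) = X (inl t) (inr s)) ∧
  (∀ s t, X (inr s) (inl t) = -X (inr t) (inl s))

/-- `X` is homogeneous of parity `px` (`false` = even, `true` = odd). -/
def IsHomog {n : ℕ} (X : Matrix (Idx n) (Idx n) ℂ) (px : Bool) : Prop :=
  ∀ a b, X a b ≠ 0 → Bool.xor (pIdx a) (pIdx b) = px

/-- The sign `(−1)^{|x||e_a|}` for `x` of parity `px`. -/
def hSign {n : ℕ} (px : Bool) (a : Idx n) : ℂ := if px && pIdx a then -1 else 1

/-- Dual basis element `E*_{st} = ½ [[e_{ts},0],[0,e_{st}]]` (even). -/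
noncomputable def Estar {n : ℕ} (s t : Fin n) : Matrix (Idx n) (Idx n) ℂ :=
  (2⁻¹ : ℂ) • (Matrix.single (inl t) (inl s) 1 +
    Matrix.single (inr s) (inr t) 1)

/-- Dual basis element `X*_{st} = −½ [[0,0],[e_{ts}+e_{st},0]]` (odd), `s ≠ t`. -/
noncomputable def Xstar {n : ℕ} (s t : Fin n) : Matrix (Idx n) (Idx n) ℂ :=
  (-(2⁻¹ : ℂ)) • (Matrix.single (inr t) (inl s) 1 +
    Matrix.single (inr s) (inl t) 1)

/-- Dual basis element `X*_{ss} = −[[0,0],[e_{ss},0]]` (odd). -/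
noncomputable def Xstarss {n : ℕ} (s : Fin n) : Matrix (Idx n) (Idx n) ℂ :=
  -Matrix.single (inr s) (inl s) (1 : ℂ)

/-- Dual basis element `Y*_{st} = −½ [[0,e_{st}−e_{ts}],[0,0]]` (odd), `s ≠ t`. -/
noncomputable def Ystar {n : ℕ} (s t : Fin n) : Matrix (Idx n) (Idx n) ℂ :=
  (-(2⁻¹ : ℂ)) • (Matrix.single (inl s) (inr t) 1 -
    Matrix.single (inl t) (inr s) 1)

/-- The identity of Lemma A.3 (equation (A.5)) for a matrix `X` of parity
`px`: `∑_{k∈I} (−1)^{|e_k|} X e_k ⊗ e_{k̄}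
= ∑_{k∈I} (−1)^{|e_k| + |x||e_k|} e_k ⊗ X e_{k̄}`. -/
def DualIdent {n : ℕ} (X : Matrix (Idx n) (Idx n) ℂ) (px : Bool) : Prop :=
  (∑ k : Idx n, sgn k • tens (colVec X k) (stdVec (bar k))) =
    ∑ k : Idx n, (sgn k * hSign px k) • tens (stdVec k) (colVec X (bar k))


lemma bar_bar {n : ℕ} (k : Idx n) : bar (bar k) = k := Sum.swap_swap k

lemma dualIdent_of {n : ℕ} (X : Matrix (Idx n) (Idx n) ℂ) (px : Bool)
    (h : ∀ a b : Idx n, sgn (bar b) * X a (bar b) = sgn a * hSign px a * X b (bar a)) :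
    DualIdent X px := by
  unfold DualIdent
  funext p
  obtain ⟨a, b⟩ := p
  have hl : (∑ k : Idx n, sgn k • tens (colVec X k) (stdVec (bar k))) (a, b)
      = sgn (bar b) * X a (bar b) := by
    rw [Finset.sum_apply]
    rw [Finset.sum_eq_single (bar b)]
    · simp [tens, stdVec, colVec, bar_bar, Pi.single_apply, mul_comm]
    · intro k _ hk
      have : b ≠ bar k := by
        intro hb; apply hk; rw [hb, bar_bar]
      simp [tens, stdVec, colVec, Pi.single_apply, this]
    · simp
  have hr : (∑ k : Idx n, (sgn k * hSign px k) • tens (stdVec k) (colVec X (bar k))) (a, b)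
      = sgn a * hSign px a * X b (bar a) := by
    rw [Finset.sum_apply]
    rw [Finset.sum_eq_single a]
    · simp [tens, stdVec, colVec, Pi.single_apply, mul_assoc]
    · intro k _ hk
      simp [tens, stdVec, colVec, Pi.single_apply, Ne.symm hk]
    · simp
  rw [hl, hr, h]

/-- Lemma A.3: the identity (A.5) holds for every member of the
explicit dual basis `{E*_{st}, X*_{st} (s≠t), X*_{ss}, Y*_{st} (s≠t)}` of
`g* ⊂ gl(n|n)`, with the appropriate parities. -/
theorem dual_basis_identity {n : ℕ} (s t : Fin n) :
    DualIdent (Estar s t) false ∧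
    (s ≠ t → DualIdent (Xstar s t) true) ∧
    DualIdent (Xstarss s) true ∧
    (s ≠ t → DualIdent (Ystar s t) true) := by
  refine ⟨?_, fun hst => ?_, ?_, fun hst => ?_⟩ <;>
  · apply dualIdent_of
    intro a b
    rcases a with a | a <;> rcases b with b | b <;>
      simp [Estar, Xstar, Xstarss, Ystar, Matrix.single, Matrix.of_apply,
        sgn, pIdx, bar, hSign, Sum.swap] <;>
      split_ifs <;> simp_all <;> (try (obtain ⟨rfl, h⟩ := ‹_ ∧ _›)) <;> (try simp_all)
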